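/- arXiv:math/0307084 — 3 statements merged into one kernel-verified Lean document; each statement's English description precedes it below -/
import Mathlib

section
/- Let f : ℝ × ℝ → ℝ be smooth, with f(·,t) Schwartz for each t and all space-time derivatives of f bounded by Schwartz bounds locally uniformly in t. Then the function t ↦ L(f(·,t)) is differentiable with d/dt L(f(·,t)) = 2 ∫_ℝ f_t(x,t) · ( −f_{xx}(x,t) + f(x,t) − f(x,t)² ) dx. In particular, if f is a classical solution of the KdV equation then L(f(·,t)) is constant in t, and every solution ψ of ψ'' − ψ + ψ² = 0 (with ψ, ψ', ψ'' ∈ L²) is a critical point of L. -/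
open MeasureTheory Real Set

noncomputable section

/-- The spatial Fourier transform, with the convention of the paper:
`f̂(ξ) = ∫ e^{-ixξ} f(x) dx`. -/
def fourierTr (f : ℝ → ℝ) (ξ : ℝ) : ℂ :=
  ∫ x : ℝ, Complex.exp (-(Complex.I) * ((x * ξ : ℝ) : ℂ)) * (f x : ℂ)

/-- The (inhomogeneous) `H^s` norm: `‖(1+|ξ|)^s f̂(ξ)‖_{L²_ξ}`. -/
def HsNorm (s : ℝ) (f : ℝ → ℝ) : ℝ :=
  (∫ ξ : ℝ, ((1 + |ξ|) ^ s * ‖fourierTr f ξ‖) ^ 2) ^ (1 / 2 : ℝ)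

/-- The `H¹` norm in physical space: `(∫ f² + (f')²)^{1/2}`. -/
def H1Norm (f : ℝ → ℝ) : ℝ :=
  (∫ x : ℝ, (f x) ^ 2 + (deriv f x) ^ 2) ^ (1 / 2 : ℝ)

/-- The ground-state soliton `ψ₀(x) = (3/2) sech²(x/2)`. -/
def psi0 (x : ℝ) : ℝ := (3 / 2) * (1 / Real.cosh (x / 2)) ^ 2

/-- `H^s` distance of `f` to the set `Σ` of translates of the ground state. -/
def distHs (s : ℝ) (f : ℝ → ℝ) : ℝ :=
  ⨅ x₀ : ℝ, HsNorm s (fun x => f x - psi0 (x - x₀))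

/-- `f : ℝ → ℝ` is a Schwartz-class function. -/
def IsSchwartz (f : ℝ → ℝ) : Prop :=
  ContDiff ℝ (⊤ : ℕ∞) f ∧
    ∀ k n : ℕ, ∃ C : ℝ, ∀ x : ℝ, |x| ^ k * |iteratedDeriv n f x| ≤ C

/-- A classical solution of the KdV equation `u_t + u_{xxx} + (u²)_x = 0`,
smooth and Schwartz in space for each time. -/
def IsKdVSolution (u : ℝ → ℝ → ℝ) : Prop :=
  ContDiff ℝ (⊤ : ℕ∞) (fun p : ℝ × ℝ => u p.1 p.2) ∧
  (∀ t : ℝ, IsSchwartz (fun x => u x t)) ∧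
  ∀ x t : ℝ, deriv (fun τ => u x τ) t + iteratedDeriv 3 (fun y => u y t) x +
      deriv (fun y => (u y t) ^ 2) x = 0

/-- The Lyapunov functional `L(f) = ∫ (f')² + f² - (2/3) f³`. -/
def Lfun (f : ℝ → ℝ) : ℝ :=
  ∫ x : ℝ, (deriv f x) ^ 2 + (f x) ^ 2 - (2 / 3) * (f x) ^ 3

/-- `m` is an admissible symbol for the smoothing operator `I = I_N` with parameters
`s`, `N`, and derivative constant `Cm`. -/
def IsSymbol (s N Cm : ℝ) (m : ℝ → ℝ) : Prop :=
  ContDiff ℝ (⊤ : ℕ∞) m ∧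
  (∀ ξ : ℝ, 0 < m ξ ∧ m ξ ≤ 1) ∧
  (∀ ξ : ℝ, m (-ξ) = m ξ) ∧
  (∀ ξ η : ℝ, |ξ| ≤ |η| → m η ≤ m ξ) ∧
  (∀ ξ : ℝ, |ξ| ≤ N → m ξ = 1) ∧
  (∀ ξ : ℝ, 10 * N ≤ |ξ| → m ξ = (|ξ| / N) ^ (s - 1)) ∧
  (∀ ξ : ℝ, N ≤ |ξ| → |deriv m ξ| ≤ Cm * m ξ / |ξ|)

/-- The inverse Fourier transform (matching the convention of `fourierTr`). -/
def invFourier (g : ℝ → ℂ) (x : ℝ) : ℂ :=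
  (1 / ((2 * Real.pi : ℝ) : ℂ)) * ∫ ξ : ℝ, Complex.exp (Complex.I * ((x * ξ : ℝ) : ℂ)) * g ξ

/-- The Fourier multiplier operator with symbol `m`, e.g. `I_N`. -/
def applyMult (m : ℝ → ℝ) (f : ℝ → ℝ) (x : ℝ) : ℝ :=
  (invFourier (fun ξ => (m ξ : ℂ) * fourierTr f ξ) x).re

/-- The space-time Fourier transform `ũ(ξ,τ) = ∫∫ e^{-i(xξ+tτ)} u(x,t) dx dt`. -/
def spacetimeFourier (u : ℝ → ℝ → ℝ) (ξ τ : ℝ) : ℂ :=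
  ∫ t : ℝ, ∫ x : ℝ, Complex.exp (-(Complex.I) * ((x * ξ + t * τ : ℝ) : ℂ)) * (u x t : ℂ)

/-- The `X^{s,b}` norm `‖⟨ξ⟩^s ⟨τ-ξ³⟩^b ũ(ξ,τ)‖_{L²_{ξ,τ}}`. -/
def XNorm (s b : ℝ) (u : ℝ → ℝ → ℝ) : ℝ :=
  (∫ ξ : ℝ, ∫ τ : ℝ,
      ((1 + |ξ|) ^ s * (1 + |τ - ξ ^ 3|) ^ b * ‖spacetimeFourier u ξ τ‖) ^ 2) ^
    (1 / 2 : ℝ)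

/-- The restricted norm `X^{s,b}_J`, the infimum of `X^{s,b}` norms over all extensions off
of the time interval `J`. -/
def XNormOn (s b : ℝ) (J : Set ℝ) (u : ℝ → ℝ → ℝ) : ℝ :=
  sInf {r : ℝ | ∃ v : ℝ → ℝ → ℝ, (∀ x : ℝ, ∀ t ∈ J, v x t = u x t) ∧ r = XNorm s b v}

/-- Symmetrization of a symbol of three variables. -/
def sym3 (M : ℝ → ℝ → ℝ → ℝ) (a b c : ℝ) : ℝ :=
  (M a b c + M a c b + M b a c + M b c a + M c a b + M c b a) / 6

/-- The trilinear form `Λ₃(M; f₁, f₂, f₃)` over the hyperplane `ξ₁+ξ₂+ξ₃=0`,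
with the symmetrized symbol. -/
def Lambda3 (M : ℝ → ℝ → ℝ → ℝ) (f₁ f₂ f₃ : ℝ → ℝ) : ℂ :=
  ∫ ξ₁ : ℝ, ∫ ξ₂ : ℝ,
    ((sym3 M ξ₁ ξ₂ (-ξ₁ - ξ₂) : ℝ) : ℂ) * fourierTr f₁ ξ₁ * fourierTr f₂ ξ₂ *
      fourierTr f₃ (-ξ₁ - ξ₂)

/-- Symmetrization of a symbol of four variables. -/
def sym4 (M : ℝ → ℝ → ℝ → ℝ → ℝ) (a b c d : ℝ) : ℝ :=
  (M a b c d + M a b d c + M a c b d + M a c d b + M a d b c + M a d c b +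
   M b a c d + M b a d c + M b c a d + M b c d a + M b d a c + M b d c a +
   M c a b d + M c a d b + M c b a d + M c b d a + M c d a b + M c d b a +
   M d a b c + M d a c b + M d b a c + M d b c a + M d c a b + M d c b a) / 24

/-- The quadrilinear form `Λ₄(M; f₁, f₂, f₃, f₄)` over the hyperplane `ξ₁+ξ₂+ξ₃+ξ₄=0`,
with the symmetrized symbol. -/
def Lambda4 (M : ℝ → ℝ → ℝ → ℝ → ℝ) (f₁ f₂ f₃ f₄ : ℝ → ℝ) : ℂ :=
  ∫ ξ₁ : ℝ, ∫ ξ₂ : ℝ, ∫ ξ₃ : ℝ,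
    ((sym4 M ξ₁ ξ₂ ξ₃ (-ξ₁ - ξ₂ - ξ₃) : ℝ) : ℂ) * fourierTr f₁ ξ₁ * fourierTr f₂ ξ₂ *
      fourierTr f₃ ξ₃ * fourierTr f₄ (-ξ₁ - ξ₂ - ξ₃)

/-- All space-time derivatives of `f` obey Schwartz-type bounds, locally uniformly in time. -/
def SchwartzLocUniform (f : ℝ → ℝ → ℝ) : Prop :=
  ∀ k n j : ℕ, ∀ T : ℝ, ∃ C : ℝ, ∀ x t : ℝ, |t| ≤ T →
    |x| ^ k * |iteratedDeriv n (fun y => iteratedDeriv j (fun τ => f y τ) t) x| ≤ C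

/-!
Differentiating under the integral sign, which is legitimate because `f` and `f_x` are bounded
and `f_t`, `f_xt` decay like `(1 + x²)⁻¹` locally uniformly in `t`, gives
`d/dt L = ∫ 2 f_x f_xt + 2 f f_t - 2 f² f_t`, and one integration by parts turns `∫ f_x f_xt`
into `-∫ f_xx f_t`. Along the KdV flow, `f_t (-f_xx + f - f²)` is the `x`-derivative of
`(f_xx + f²)² / 2 - f f_xx + f_x² / 2 - (2/3) f³`, which vanishes at `±∞`, so `L` is conserved.
For a solution `ψ` of `ψ'' - ψ + ψ² = 0` the same computation along the line `ψ + a h` applies,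
since `ψ, ψ' ∈ H¹ ⊂ L^∞`, and the first variation `2 ∫ h (-ψ'' + ψ - ψ²)` vanishes.
-/

open Filter Topology
open scoped ContDiff

section Decay

variable {g : ℝ → ℝ} {C : ℝ}

theorem div_one_add_sq_le (hC : 0 ≤ C) (x : ℝ) : C / (1 + x ^ 2) ≤ C :=
  div_le_self hC (by nlinarith [sq_nonneg x])

theorem abs_le_div_one_add_sq {x y C₀ C₂ : ℝ} (h₀ : |y| ≤ C₀) (h₂ : |x| ^ 2 * |y| ≤ C₂)
    (hC : C₀ + C₂ ≤ C) : |y| ≤ C / (1 + x ^ 2) := by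
  rw [sq_abs] at h₂
  rw [le_div_iff₀ (by positivity)]
  nlinarith

theorem abs_mul_le_div_one_add_sq {x a b M : ℝ} (ha : |a| ≤ M) (hb : |b| ≤ C / (1 + x ^ 2)) :
    |a * b| ≤ M * C / (1 + x ^ 2) := by
  rw [abs_mul, mul_div_assoc]
  exact mul_le_mul ha hb (abs_nonneg b) ((abs_nonneg a).trans ha)

theorem integrable_of_abs_le_div_one_add_sq (hg : Continuous g)
    (h : ∀ x, |g x| ≤ C / (1 + x ^ 2)) : Integrable g :=
  (integrable_inv_one_add_sq.const_mul C).mono' hg.aestronglyMeasurable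
    (ae_of_all _ fun x => by simpa [div_eq_mul_inv] using h x)

theorem tendsto_cocompact_of_abs_le_div_one_add_sq (h : ∀ x, |g x| ≤ C / (1 + x ^ 2)) :
    Tendsto g (cocompact ℝ) (𝓝 0) := by
  have hsq : Tendsto (fun x : ℝ => 1 + x ^ 2) (cocompact ℝ) atTop := by
    simpa [Real.norm_eq_abs, sq_abs] using tendsto_atTop_add_const_left _ 1
      ((tendsto_pow_atTop two_ne_zero).comp (tendsto_norm_cocompact_atTop (E := ℝ)))
  exact squeeze_zero_norm h (tendsto_const_nhds.div_atTop hsq)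

end Decay

theorem exists_abs_le_of_integrable_sq {u u' : ℝ → ℝ} (hu : ∀ x, HasDerivAt u (u' x) x)
    (hu' : Continuous u') (h : Integrable fun x => u x ^ 2)
    (h' : Integrable fun x => u' x ^ 2) : ∃ M, ∀ x, |u x| ≤ M := by
  have hcont : Continuous u := continuous_iff_continuousAt.2 fun x => (hu x).continuousAt
  have hprod : Integrable fun x => 2 * (u x * u' x) :=
    (h.add h').mono' (by fun_prop) (ae_of_all _ fun x => by
      rw [Real.norm_eq_abs, abs_le, Pi.add_apply]
      constructor <;> nlinarith [sq_nonneg (u x + u' x), sq_nonneg (u x - u' x)])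
  refine ⟨√(u 0 ^ 2 + ∫ y, |2 * (u y * u' y)|), fun x => Real.abs_le_sqrt ?_⟩
  have hsq : ∀ y, HasDerivAt (fun y => u y ^ 2) (2 * (u y * u' y)) y := fun y =>
    ((hu y).pow 2).congr_deriv (by push_cast; ring)
  have hftc : ∫ y in (0)..x, 2 * (u y * u' y) = u x ^ 2 - u 0 ^ 2 :=
    intervalIntegral.integral_eq_sub_of_hasDerivAt (fun y _ => hsq y) hprod.intervalIntegrable
  have hle : ∫ y in (0)..x, 2 * (u y * u' y) ≤ ∫ y, |2 * (u y * u' y)| :=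
    calc _ ≤ ‖∫ y in (0)..x, 2 * (u y * u' y)‖ := le_abs_self _
      _ ≤ ∫ y in Set.uIoc 0 x, ‖2 * (u y * u' y)‖ :=
        intervalIntegral.norm_integral_le_integral_norm_uIoc
      _ ≤ ∫ y, |2 * (u y * u' y)| :=
        setIntegral_le_integral hprod.norm (ae_of_all _ fun y => norm_nonneg _)
  linarith

section PartialDerivatives

variable {G : ℝ × ℝ → ℝ} {m n : WithTop ℕ∞}

def pdx (G : ℝ × ℝ → ℝ) (p : ℝ × ℝ) : ℝ := fderiv ℝ G p (1, 0)

def pdt (G : ℝ × ℝ → ℝ) (p : ℝ × ℝ) : ℝ := fderiv ℝ G p (0, 1)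

theorem hasDerivAt_pdx {x t : ℝ} (hG : DifferentiableAt ℝ G (x, t)) :
    HasDerivAt (fun y => G (y, t)) (pdx G (x, t)) x :=
  hG.hasFDerivAt.comp_hasDerivAt x ((hasDerivAt_id x).prodMk (hasDerivAt_const x t))

theorem hasDerivAt_pdt {x t : ℝ} (hG : DifferentiableAt ℝ G (x, t)) :
    HasDerivAt (fun τ => G (x, τ)) (pdt G (x, t)) t :=
  hG.hasFDerivAt.comp_hasDerivAt t ((hasDerivAt_const t x).prodMk (hasDerivAt_id t))

theorem contDiff_pdx (hG : ContDiff ℝ n G) (hmn : m + 1 ≤ n) : ContDiff ℝ m (pdx G) :=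
  (hG.fderiv_right hmn).clm_apply contDiff_const

theorem contDiff_pdt (hG : ContDiff ℝ n G) (hmn : m + 1 ≤ n) : ContDiff ℝ m (pdt G) :=
  (hG.fderiv_right hmn).clm_apply contDiff_const

theorem pdt_pdx (hG : ContDiff ℝ 2 G) : pdt (pdx G) = pdx (pdt G) := by
  ext p
  have hdiff : DifferentiableAt ℝ (fderiv ℝ G) p :=
    (hG.fderiv_right (m := 1) le_rfl).differentiable one_ne_zero p
  have hsymm : IsSymmSndFDerivAt ℝ G p :=
    hG.contDiffAt.isSymmSndFDerivAt (by simp [minSmoothness_of_isRCLikeNormedField])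
  change fderiv ℝ (fun q => fderiv ℝ G q (1, 0)) p (0, 1)
    = fderiv ℝ (fun q => fderiv ℝ G q (0, 1)) p (1, 0)
  simp only [fderiv_clm_apply hdiff (differentiableAt_const _), fderiv_fun_const]
  simpa using hsymm (0, 1) (1, 0)

theorem contDiff_pdt_iterate (hG : ContDiff ℝ ∞ G) (k : ℕ) : ContDiff ℝ ∞ (pdt^[k] G) := by
  induction k with
  | zero => exact hG
  | succ k ih => rw [Function.iterate_succ_apply']; exact contDiff_pdt ih le_rfl

theorem contDiff_pdx_iterate (hG : ContDiff ℝ ∞ G) (k : ℕ) : ContDiff ℝ ∞ (pdx^[k] G) := by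
  induction k with
  | zero => exact hG
  | succ k ih => rw [Function.iterate_succ_apply']; exact contDiff_pdx ih le_rfl

theorem iteratedDeriv_eq_pdx_iterate (hG : ContDiff ℝ ∞ G) (k : ℕ) (t : ℝ) :
    iteratedDeriv k (fun y => G (y, t)) = fun x => pdx^[k] G (x, t) := by
  induction k generalizing G with
  | zero => rfl
  | succ k ih =>
    have hderiv : deriv (fun y => G (y, t)) = fun y => pdx G (y, t) :=
      funext fun y => (hasDerivAt_pdx (hG.differentiable (by simp) _)).deriv
    rw [iteratedDeriv_succ', hderiv, ih (contDiff_pdx hG le_rfl), Function.iterate_succ]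
    rfl

theorem iteratedDeriv_eq_pdt_iterate (hG : ContDiff ℝ ∞ G) (k : ℕ) (x : ℝ) :
    iteratedDeriv k (fun τ => G (x, τ)) = fun t => pdt^[k] G (x, t) := by
  induction k generalizing G with
  | zero => rfl
  | succ k ih =>
    have hderiv : deriv (fun τ => G (x, τ)) = fun τ => pdt G (x, τ) :=
      funext fun τ => (hasDerivAt_pdt (hG.differentiable (by simp) _)).deriv
    rw [iteratedDeriv_succ', hderiv, ih (contDiff_pdt hG le_rfl), Function.iterate_succ]
    rfl

end PartialDerivatives

theorem abs_neg_add_sub_sq_le {a b M : ℝ} (ha : |a| ≤ M) (hb : |b| ≤ M) :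
    |-b + a - a ^ 2| ≤ 2 * M + M ^ 2 := by
  obtain ⟨ha₁, ha₂⟩ := abs_le.mp ha
  obtain ⟨hb₁, hb₂⟩ := abs_le.mp hb
  rw [abs_le]
  constructor <;> nlinarith

theorem abs_add_mul_le {a b c B D : ℝ} (ha : |a| ≤ 1) (hb : |b| ≤ B) (hc : |c| ≤ D) :
    |b + a * c| ≤ B + D :=
  calc |b + a * c| ≤ |b| + |a| * |c| := (abs_add_le _ _).trans_eq (by rw [abs_mul])
    _ ≤ B + 1 * D := by gcongr
    _ = B + D := by ring

theorem abs_lyapunov_variation_le {a b p q M w : ℝ} (ha : |a| ≤ M) (hb : |b| ≤ M)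
    (hp : |p| ≤ w) (hq : |q| ≤ w) :
    |2 * b * q + 2 * a * p - 2 * a ^ 2 * p| ≤ (4 * M + 2 * M ^ 2) * w := by
  have hM : 0 ≤ M := (abs_nonneg a).trans ha
  calc |2 * b * q + 2 * a * p - 2 * a ^ 2 * p|
      ≤ |2 * b * q| + |2 * a * p| + |2 * a ^ 2 * p| :=
        (abs_sub _ _).trans (add_le_add_left (abs_add_le _ _) _)
    _ = 2 * (|b| * |q|) + 2 * (|a| * |p|) + 2 * (|a| ^ 2 * |p|) := by
        simp only [abs_mul, abs_pow, abs_two]; ring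
    _ ≤ 2 * (M * w) + 2 * (M * w) + 2 * (M ^ 2 * w) := by gcongr
    _ = (4 * M + 2 * M ^ 2) * w := by ring

theorem integral_lyapunov_variation_eq {u u₁ u₂ v v₁ : ℝ → ℝ} {M C : ℝ}
    (hu₁ : ∀ x, HasDerivAt u₁ (u₂ x) x) (hv : ∀ x, HasDerivAt v (v₁ x) x)
    (hu : Continuous u) (hu₂ : Continuous u₂) (hv₁ : Continuous v₁)
    (hbdd : ∀ x, |u x| ≤ M ∧ |u₁ x| ≤ M ∧ |u₂ x| ≤ M)
    (hdecay : ∀ x, |v x| ≤ C / (1 + x ^ 2) ∧ |v₁ x| ≤ C / (1 + x ^ 2)) :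
    ∫ x, (2 * u₁ x * v₁ x + 2 * u x * v x - 2 * u x ^ 2 * v x) =
      2 * ∫ x, v x * (-u₂ x + u x - u x ^ 2) := by
  have hu₁c : Continuous u₁ := continuous_iff_continuousAt.2 fun x => (hu₁ x).continuousAt
  have hvc : Continuous v := continuous_iff_continuousAt.2 fun x => (hv x).continuousAt
  have hprod : ∀ x, HasDerivAt (fun y => u₁ y * v y) (u₂ x * v x + u₁ x * v₁ x) x :=
    fun x => (hu₁ x).mul (hv x)
  have hprod_int : Integrable fun x => u₁ x * v x :=
    integrable_of_abs_le_div_one_add_sq (hu₁c.mul hvc)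
      fun x => abs_mul_le_div_one_add_sq (hbdd x).2.1 (hdecay x).1
  have hderiv_int : Integrable fun x => u₂ x * v x + u₁ x * v₁ x :=
    integrable_of_abs_le_div_one_add_sq (C := M * C + M * C) (by fun_prop) fun x =>
      (abs_add_le _ _).trans <| (add_le_add
        (abs_mul_le_div_one_add_sq (hbdd x).2.2 (hdecay x).1)
        (abs_mul_le_div_one_add_sq (hbdd x).2.1 (hdecay x).2)).trans_eq (add_div _ _ _).symm
  have hvar_int : Integrable fun x => 2 * u₁ x * v₁ x + 2 * u x * v x - 2 * u x ^ 2 * v x :=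
    integrable_of_abs_le_div_one_add_sq (by fun_prop) fun x =>
      (abs_lyapunov_variation_le (hbdd x).1 (hbdd x).2.1 (hdecay x).1 (hdecay x).2).trans_eq
        (mul_div_assoc _ _ _).symm
  have hibp : ∫ x, (u₂ x * v x + u₁ x * v₁ x) = 0 :=
    integral_eq_zero_of_hasDerivAt_of_integrable hprod hderiv_int hprod_int
  have hgrad_int : Integrable fun x => 2 * (v x * (-u₂ x + u x - u x ^ 2)) :=
    (hvar_int.sub (hderiv_int.const_mul 2)).congr
      (ae_of_all _ fun x => by simp only [Pi.sub_apply]; ring)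
  calc ∫ x, (2 * u₁ x * v₁ x + 2 * u x * v x - 2 * u x ^ 2 * v x)
      = ∫ x, (2 * (v x * (-u₂ x + u x - u x ^ 2)) + 2 * (u₂ x * v x + u₁ x * v₁ x)) := by
        congr 1; ext x; ring
    _ = 2 * ∫ x, v x * (-u₂ x + u x - u x ^ 2) := by
        rw [integral_add hgrad_int (hderiv_int.const_mul 2), integral_const_mul,
          integral_const_mul, hibp, mul_zero, add_zero]

theorem hasDerivAt_Lfun_of_bounds {G : ℝ × ℝ → ℝ} {t₀ M C : ℝ} (hG : ContDiff ℝ 2 G)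
    (hbdd : ∀ x, ∀ t ∈ Metric.ball t₀ 1, |G (x, t)| ≤ M ∧ |pdx G (x, t)| ≤ M)
    (hbdd₂ : ∀ x, |pdx (pdx G) (x, t₀)| ≤ M)
    (hdecay : ∀ x, ∀ t ∈ Metric.ball t₀ 1,
      |pdt G (x, t)| ≤ C / (1 + x ^ 2) ∧ |pdx (pdt G) (x, t)| ≤ C / (1 + x ^ 2))
    (hsq : Integrable fun x => G (x, t₀) ^ 2) (hsq' : Integrable fun x => pdx G (x, t₀) ^ 2) :
    HasDerivAt (fun t => Lfun fun x => G (x, t))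
      (2 * ∫ x, pdt G (x, t₀) * (-pdx (pdx G) (x, t₀) + G (x, t₀) - G (x, t₀) ^ 2)) t₀ := by
  have hGx : ContDiff ℝ 1 (pdx G) := contDiff_pdx hG le_rfl
  have hGt : ContDiff ℝ 1 (pdt G) := contDiff_pdt hG le_rfl
  have hGxx : Continuous (pdx (pdx G)) := (contDiff_pdx (m := 0) hGx le_rfl).continuous
  have hGxt : Continuous (pdx (pdt G)) := (contDiff_pdx (m := 0) hGt le_rfl).continuous
  have hGc := hG.continuous
  have hGxc := hGx.continuous
  have hGtc := hGt.continuous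
  have ht₀ : t₀ ∈ Metric.ball t₀ 1 := Metric.mem_ball_self one_pos
  have hL : (fun t => Lfun fun x => G (x, t)) =
      fun t => ∫ x, pdx G (x, t) ^ 2 + G (x, t) ^ 2 - 2 / 3 * G (x, t) ^ 3 := by
    ext t
    simp only [Lfun, (hasDerivAt_pdx (hG.differentiable two_ne_zero _)).deriv]
  have hcube : Integrable fun x => G (x, t₀) ^ 3 :=
    (hsq.bdd_mul (c := M) (by fun_prop) (ae_of_all _ fun x => (hbdd x t₀ ht₀).1)).congr
      (ae_of_all _ fun x => by ring)
  have hvar : ∀ x, ∀ t ∈ Metric.ball t₀ 1,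
      HasDerivAt (fun t => pdx G (x, t) ^ 2 + G (x, t) ^ 2 - 2 / 3 * G (x, t) ^ 3)
        (2 * pdx G (x, t) * pdx (pdt G) (x, t) + 2 * G (x, t) * pdt G (x, t)
          - 2 * G (x, t) ^ 2 * pdt G (x, t)) t := by
    intro x t _
    have hGt' := hasDerivAt_pdt (hG.differentiable two_ne_zero (x, t))
    have hGxt' := hasDerivAt_pdt (hGx.differentiable one_ne_zero (x, t))
    rw [pdt_pdx hG] at hGxt'
    exact (((hGxt'.pow 2).add (hGt'.pow 2)).sub ((hGt'.pow 3).const_mul _)).congr_deriv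
      (by push_cast; ring)
  obtain ⟨-, hderiv⟩ := hasDerivAt_integral_of_dominated_loc_of_deriv_le
    (Metric.ball_mem_nhds t₀ one_pos) (Eventually.of_forall fun t => by fun_prop)
    ((hsq'.add hsq).sub (hcube.const_mul _)) (by fun_prop)
    (ae_of_all _ fun x t ht => abs_lyapunov_variation_le (hbdd x t ht).1 (hbdd x t ht).2
      (hdecay x t ht).1 (hdecay x t ht).2)
    ((integrable_inv_one_add_sq.const_mul ((4 * M + 2 * M ^ 2) * C)).congr
      (ae_of_all _ fun x => by simp only [div_eq_mul_inv, mul_assoc]))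
    (ae_of_all _ hvar)
  rw [hL, ← integral_lyapunov_variation_eq
    (fun x => hasDerivAt_pdx (hGx.differentiable one_ne_zero (x, t₀)))
    (fun x => hasDerivAt_pdx (hGt.differentiable one_ne_zero (x, t₀)))
    (by fun_prop) (by fun_prop) (by fun_prop)
    (fun x => ⟨(hbdd x t₀ ht₀).1, (hbdd x t₀ ht₀).2, hbdd₂ x⟩) (fun x => hdecay x t₀ ht₀)]
  exact hderiv

theorem integral_kdv_mul_eq_zero {u u₁ u₂ u₃ v : ℝ → ℝ} (hu : ∀ x, HasDerivAt u (u₁ x) x)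
    (hu₁ : ∀ x, HasDerivAt u₁ (u₂ x) x) (hu₂ : ∀ x, HasDerivAt u₂ (u₃ x) x)
    (hkdv : ∀ x, v x = -(u₃ x + 2 * u x * u₁ x))
    (hint : Integrable fun x => v x * (-u₂ x + u x - u x ^ 2))
    (h₀ : Tendsto u (cocompact ℝ) (𝓝 0)) (h₁ : Tendsto u₁ (cocompact ℝ) (𝓝 0))
    (h₂ : Tendsto u₂ (cocompact ℝ) (𝓝 0)) :
    ∫ x, v x * (-u₂ x + u x - u x ^ 2) = 0 := by
  set Φ : ℝ → ℝ := fun x =>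
    (u₂ x + u x ^ 2) ^ 2 / 2 - u x * u₂ x + u₁ x ^ 2 / 2 - 2 / 3 * u x ^ 3
  have hΦ : ∀ x, HasDerivAt Φ (v x * (-u₂ x + u x - u x ^ 2)) x := fun x =>
    (((((hu₂ x).add ((hu x).pow 2)).pow 2).div_const 2).sub ((hu x).mul (hu₂ x)) |>.add
      (((hu₁ x).pow 2).div_const 2) |>.sub (((hu x).pow 3).const_mul _)).congr_deriv
      (by rw [hkdv]; simp only [Pi.add_apply, Pi.pow_apply]; push_cast; ring)
  have hlim : Tendsto Φ (cocompact ℝ) (𝓝 0) := by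
    simpa using (((h₂.add (h₀.pow 2)).pow 2).div_const 2).sub (h₀.mul h₂) |>.add
      ((h₁.pow 2).div_const 2) |>.sub ((h₀.pow 3).const_mul (2 / 3))
  simpa using integral_of_hasDerivAt_of_tendsto hΦ hint (hlim.mono_left atBot_le_cocompact)
    (hlim.mono_left atTop_le_cocompact)

theorem IsSchwartz.eventually_abs_iteratedDeriv_le {h : ℝ → ℝ} (hh : IsSchwartz h) (n : ℕ) :
    ∀ᶠ C in atTop, ∀ x, |iteratedDeriv n h x| ≤ C / (1 + x ^ 2) := by
  obtain ⟨C₀, hC₀⟩ := hh.2 0 n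
  obtain ⟨C₂, hC₂⟩ := hh.2 2 n
  filter_upwards [eventually_ge_atTop (C₀ + C₂)] with C hC x
  exact abs_le_div_one_add_sq (by simpa using hC₀ x) (hC₂ x) hC

namespace SchwartzLocUniform

variable {f : ℝ → ℝ → ℝ}

theorem eventually_abs_pdx_pdt_le (hB : SchwartzLocUniform f)
    (hf : ContDiff ℝ ∞ (Function.uncurry f)) (N : ℕ) (T : ℝ) :
    ∀ᶠ C in atTop, ∀ n ≤ N, ∀ j ≤ N, ∀ x t, |t| ≤ T →
      |pdx^[n] (pdt^[j] (Function.uncurry f)) (x, t)| ≤ C / (1 + x ^ 2) := by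
  refine (eventually_all_finite (finite_Iic N)).2 fun n _ =>
    (eventually_all_finite (finite_Iic N)).2 fun j _ => ?_
  obtain ⟨C₀, hC₀⟩ := hB 0 n j T
  obtain ⟨C₂, hC₂⟩ := hB 2 n j T
  filter_upwards [eventually_ge_atTop (C₀ + C₂)] with C hC x t ht
  have hpartial : iteratedDeriv n (fun y => iteratedDeriv j (fun τ => f y τ) t) x =
      pdx^[n] (pdt^[j] (Function.uncurry f)) (x, t) := by
    have hj : (fun y => iteratedDeriv j (fun τ => f y τ) t) =
        fun y => pdt^[j] (Function.uncurry f) (y, t) :=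
      funext fun y => congrFun (iteratedDeriv_eq_pdt_iterate hf j y) t
    rw [hj]
    exact congrFun (iteratedDeriv_eq_pdx_iterate (contDiff_pdt_iterate hf j) n t) x
  rw [← hpartial]
  exact abs_le_div_one_add_sq (by simpa using hC₀ x t ht) (hC₂ x t ht) hC

theorem hasDerivAt_Lfun (hB : SchwartzLocUniform f)
    (hf : ContDiff ℝ ∞ (Function.uncurry f)) (t : ℝ) :
    HasDerivAt (fun τ => Lfun fun x => f x τ)
      (2 * ∫ x, pdt (Function.uncurry f) (x, t) *
        (-pdx (pdx (Function.uncurry f)) (x, t) + f x t - f x t ^ 2)) t := by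
  obtain ⟨C, hC₀, hC⟩ :=
    ((eventually_ge_atTop 0).and (hB.eventually_abs_pdx_pdt_le hf 2 (|t| + 1))).exists
  have hdecay : ∀ n ≤ 2, ∀ j ≤ 2, ∀ x, ∀ τ ∈ Metric.ball t 1,
      |pdx^[n] (pdt^[j] (Function.uncurry f)) (x, τ)| ≤ C / (1 + x ^ 2) := by
    intro n hn j hj x τ hτ
    refine hC n hn j hj x τ ?_
    have := abs_sub_abs_le_abs_sub τ t
    rw [Metric.mem_ball, Real.dist_eq] at hτ
    linarith
  have hbdd : ∀ n ≤ 2, ∀ j ≤ 2, ∀ x, ∀ τ ∈ Metric.ball t 1,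
      |pdx^[n] (pdt^[j] (Function.uncurry f)) (x, τ)| ≤ C :=
    fun n hn j hj x τ hτ => (hdecay n hn j hj x τ hτ).trans (div_one_add_sq_le hC₀ x)
  have ht : t ∈ Metric.ball t 1 := Metric.mem_ball_self one_pos
  have hsq : ∀ n ≤ 2, Integrable fun x => pdx^[n] (Function.uncurry f) (x, t) ^ 2 :=
    fun n hn => integrable_of_abs_le_div_one_add_sq
      (((contDiff_pdx_iterate hf n).continuous.comp (Continuous.prodMk_left t)).pow 2)
      fun x => by
        rw [pow_two]
        exact abs_mul_le_div_one_add_sq (hbdd n hn 0 (by norm_num) x t ht)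
          (hdecay n hn 0 (by norm_num) x t ht)
  exact hasDerivAt_Lfun_of_bounds (hf.of_le (by norm_cast))
    (fun x τ hτ => ⟨hbdd 0 (by norm_num) 0 (by norm_num) x τ hτ,
      hbdd 1 (by norm_num) 0 (by norm_num) x τ hτ⟩)
    (fun x => hbdd 2 le_rfl 0 (by norm_num) x t ht)
    (fun x τ hτ => ⟨hdecay 0 (by norm_num) 1 (by norm_num) x τ hτ,
      hdecay 1 (by norm_num) 1 (by norm_num) x τ hτ⟩)
    (hsq 0 (by norm_num)) (hsq 1 (by norm_num))

theorem integral_eq_zero_of_isKdVSolution (hB : SchwartzLocUniform f) (hK : IsKdVSolution f)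
    (t : ℝ) :
    ∫ x, pdt (Function.uncurry f) (x, t) *
      (-pdx (pdx (Function.uncurry f)) (x, t) + f x t - f x t ^ 2) = 0 := by
  have hf : ContDiff ℝ ∞ (Function.uncurry f) := hK.1
  obtain ⟨C, hC₀, hC⟩ :=
    ((eventually_ge_atTop 0).and (hB.eventually_abs_pdx_pdt_le hf 2 |t|)).exists
  have hdecay : ∀ n ≤ 2, ∀ j ≤ 2, ∀ x,
      |pdx^[n] (pdt^[j] (Function.uncurry f)) (x, t)| ≤ C / (1 + x ^ 2) :=
    fun n hn j hj x => hC n hn j hj x t le_rfl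
  have hbdd : ∀ n ≤ 2, ∀ x, |pdx^[n] (Function.uncurry f) (x, t)| ≤ C :=
    fun n hn x => (hdecay n hn 0 (by norm_num) x).trans (div_one_add_sq_le hC₀ x)
  have hx : ∀ n, ∀ x, HasDerivAt (fun y => pdx^[n] (Function.uncurry f) (y, t))
      (pdx^[n + 1] (Function.uncurry f) (x, t)) x := fun n x => by
    rw [Function.iterate_succ_apply']
    exact hasDerivAt_pdx ((contDiff_pdx_iterate hf n).differentiable (by simp) _)
  have hkdv : ∀ x, pdt (Function.uncurry f) (x, t) =
      -(pdx^[3] (Function.uncurry f) (x, t) + 2 * f x t * pdx (Function.uncurry f) (x, t)) := by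
    intro x
    have hsq : HasDerivAt (fun y => f y t ^ 2) (2 * f x t * pdx (Function.uncurry f) (x, t)) x :=
      ((hx 0 x).pow 2).congr_deriv (by simp)
    have ht : deriv (fun τ => f x τ) t = pdt (Function.uncurry f) (x, t) :=
      (hasDerivAt_pdt (hf.differentiable (by simp) (x, t))).deriv
    have hxxx : iteratedDeriv 3 (fun y => f y t) x = pdx^[3] (Function.uncurry f) (x, t) :=
      congrFun (iteratedDeriv_eq_pdx_iterate hf 3 t) x
    linarith [hK.2.2 x t, hsq.deriv]
  refine integral_kdv_mul_eq_zero (hx 0) (hx 1) (hx 2) hkdv ?_ ?_ ?_ ?_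
  · have hcont := (contDiff_pdt (m := 0) hf (by simp)).continuous
    refine (integrable_of_abs_le_div_one_add_sq (hcont.comp (Continuous.prodMk_left t))
      (hdecay 0 (by norm_num) 1 (by norm_num))).mul_bdd (c := 2 * C + C ^ 2) ?_
      (ae_of_all _ fun x => abs_neg_add_sub_sq_le (hbdd 0 (by norm_num) x) (hbdd 2 le_rfl x))
    have hxx : Continuous (pdx (pdx (Function.uncurry f))) :=
      (contDiff_pdx_iterate hf 2).continuous
    have hu : Continuous fun x => f x t := hf.continuous.comp (Continuous.prodMk_left t)
    fun_prop
  · exact tendsto_cocompact_of_abs_le_div_one_add_sq (hdecay 0 (by norm_num) 0 (by norm_num))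
  · exact tendsto_cocompact_of_abs_le_div_one_add_sq (hdecay 1 (by norm_num) 0 (by norm_num))
  · exact tendsto_cocompact_of_abs_le_div_one_add_sq (hdecay 2 (by norm_num) 0 (by norm_num))

end SchwartzLocUniform

section Line

variable {ψ h : ℝ → ℝ}

theorem pdx_add_mul (hψ : Differentiable ℝ ψ) (hh : Differentiable ℝ h) :
    pdx (fun p : ℝ × ℝ => ψ p.1 + p.2 * h p.1) = fun p => deriv ψ p.1 + p.2 * deriv h p.1 := by
  ext ⟨x, a⟩
  exact (hasDerivAt_pdx (by fun_prop)).unique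
    ((hψ x).hasDerivAt.add ((hh x).hasDerivAt.const_mul a))

theorem pdt_add_mul (hψ : Differentiable ℝ ψ) (hh : Differentiable ℝ h) :
    pdt (fun p : ℝ × ℝ => ψ p.1 + p.2 * h p.1) = fun p => h p.1 := by
  ext ⟨x, a⟩
  exact (hasDerivAt_pdt (by fun_prop)).unique ((hasDerivAt_mul_const (h x)).const_add (ψ x))

theorem pdx_comp_fst (hh : Differentiable ℝ h) :
    pdx (fun p : ℝ × ℝ => h p.1) = fun p => deriv h p.1 := by
  ext ⟨x, a⟩
  exact (hasDerivAt_pdx (by fun_prop)).unique (hh x).hasDerivAt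

theorem exists_abs_le_and_abs_deriv_le_of_integrable_sq (hψ : ContDiff ℝ 2 ψ)
    (hL0 : Integrable fun x => ψ x ^ 2) (hL1 : Integrable fun x => deriv ψ x ^ 2)
    (hL2 : Integrable fun x => iteratedDeriv 2 ψ x ^ 2) :
    ∃ M, ∀ x, |ψ x| ≤ M ∧ |deriv ψ x| ≤ M := by
  have hψ₂ : iteratedDeriv 2 ψ = deriv (deriv ψ) := by rw [iteratedDeriv_succ, iteratedDeriv_one]
  obtain ⟨M₀, hM₀⟩ := exists_abs_le_of_integrable_sq
    (fun x => (hψ.differentiable two_ne_zero x).hasDerivAt) (hψ.continuous_deriv (by norm_num))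
    hL0 hL1
  obtain ⟨M₁, hM₁⟩ := exists_abs_le_of_integrable_sq
    (fun x => (hψ.differentiable_deriv_two x).hasDerivAt)
    (hψ₂ ▸ hψ.continuous_iteratedDeriv 2 le_rfl) hL1 (hψ₂ ▸ hL2)
  exact ⟨max M₀ M₁, fun x => ⟨(hM₀ x).trans (le_max_left _ _), (hM₁ x).trans (le_max_right _ _)⟩⟩

theorem hasDerivAt_Lfun_add_mul_of_ode {M C : ℝ} (hψ : ContDiff ℝ 2 ψ) (hh : ContDiff ℝ 2 h)
    (hode : ∀ x, iteratedDeriv 2 ψ x - ψ x + ψ x ^ 2 = 0)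
    (hL0 : Integrable fun x => ψ x ^ 2) (hL1 : Integrable fun x => deriv ψ x ^ 2)
    (hbdd : ∀ x, |ψ x| ≤ M ∧ |deriv ψ x| ≤ M)
    (hdecay : ∀ x, |h x| ≤ C / (1 + x ^ 2) ∧ |deriv h x| ≤ C / (1 + x ^ 2)) :
    HasDerivAt (fun a => Lfun fun x => ψ x + a * h x) 0 0 := by
  have hψd := hψ.differentiable two_ne_zero
  have hhd := hh.differentiable two_ne_zero
  have hψ₂ : ∀ x, deriv (deriv ψ) x = ψ x - ψ x ^ 2 := fun x => by
    have := hode x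
    rw [iteratedDeriv_succ, iteratedDeriv_one] at this
    linarith
  have hM : 0 ≤ M := (abs_nonneg _).trans (hbdd 0).1
  have hC : 0 ≤ C := by simpa using (abs_nonneg _).trans (hdecay 0).1
  have hhC : ∀ x, |h x| ≤ C ∧ |deriv h x| ≤ C := fun x =>
    ⟨(hdecay x).1.trans (div_one_add_sq_le hC x), (hdecay x).2.trans (div_one_add_sq_le hC x)⟩
  have hpdxx : pdx (pdx fun p : ℝ × ℝ => ψ p.1 + p.2 * h p.1) =
      fun p => deriv (deriv ψ) p.1 + p.2 * deriv (deriv h) p.1 := by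
    rw [pdx_add_mul hψd hhd, pdx_add_mul hψ.differentiable_deriv_two hh.differentiable_deriv_two]
  have hG : ContDiff ℝ 2 fun p : ℝ × ℝ => ψ p.1 + p.2 * h p.1 := by fun_prop
  have hderiv := hasDerivAt_Lfun_of_bounds (t₀ := 0) (M := 2 * M + M ^ 2 + C) (C := C) hG
    (fun x a ha => by
      have ha' : |a| ≤ 1 := by simpa [Real.dist_eq] using (Metric.mem_ball.mp ha).le
      rw [pdx_add_mul hψd hhd]
      exact ⟨(abs_add_mul_le ha' (hbdd x).1 (hhC x).1).trans (by nlinarith),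
        (abs_add_mul_le ha' (hbdd x).2 (hhC x).2).trans (by nlinarith)⟩)
    (fun x => by
      simpa [hpdxx, hψ₂] using (abs_neg_add_sub_sq_le (hbdd x).1 (b := 0)
        (by simpa using hM)).trans (le_add_of_nonneg_right hC))
    (fun x a _ => by simpa [pdt_add_mul hψd hhd, pdx_comp_fst hhd] using hdecay x)
    (by simpa using hL0) (by simpa [pdx_add_mul hψd hhd] using hL1)
  convert hderiv using 1
  simp [pdt_add_mul hψd hhd, hpdxx, hψ₂]

end Line

theorem lyapunov_time_derivative_general (f : ℝ → ℝ → ℝ)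
    (hf : ContDiff ℝ (⊤ : ℕ∞) (fun p : ℝ × ℝ => f p.1 p.2))
    (hB : SchwartzLocUniform f) :
    (∀ t : ℝ, HasDerivAt (fun τ => Lfun (fun x => f x τ))
        (2 * ∫ x : ℝ, deriv (fun τ => f x τ) t *
          (-(iteratedDeriv 2 (fun y => f y t) x) + f x t - (f x t) ^ 2)) t) ∧
    (IsKdVSolution f → ∀ t : ℝ, Lfun (fun x => f x t) = Lfun (fun x => f x 0)) ∧
    (∀ ψ : ℝ → ℝ, ContDiff ℝ (⊤ : ℕ∞) ψ →
      (∀ x : ℝ, iteratedDeriv 2 ψ x - ψ x + (ψ x) ^ 2 = 0) →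
      MeasureTheory.Integrable (fun x : ℝ => (ψ x) ^ 2) →
      MeasureTheory.Integrable (fun x : ℝ => (deriv ψ x) ^ 2) →
      MeasureTheory.Integrable (fun x : ℝ => (iteratedDeriv 2 ψ x) ^ 2) →
      ∀ h : ℝ → ℝ, IsSchwartz h →
        HasDerivAt (fun a : ℝ => Lfun (fun x => ψ x + a * h x)) 0 0) := by
  have hderiv := hB.hasDerivAt_Lfun hf
  refine ⟨fun t => ?_, fun hK t => ?_, fun ψ hψ hode hL0 hL1 hL2 h hh => ?_⟩
  · convert hderiv t using 4 with x
    rw [(hasDerivAt_pdt (hf.differentiable (by simp) (x, t))).deriv,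
      congrFun (iteratedDeriv_eq_pdx_iterate hf 2 t) x]
    rfl
  · have hconst : ∀ s, HasDerivAt (fun τ => Lfun fun x => f x τ) 0 s := fun s => by
      simpa [hB.integral_eq_zero_of_isKdVSolution hK s] using hderiv s
    exact is_const_of_deriv_eq_zero (fun s => (hconst s).differentiableAt)
      (fun s => (hconst s).deriv) t 0
  · obtain ⟨C, hC₀, hC₁⟩ := ((hh.eventually_abs_iteratedDeriv_le 0).and
      (hh.eventually_abs_iteratedDeriv_le 1)).exists
    have hψ₂ : ContDiff ℝ 2 ψ := hψ.of_le (by norm_cast)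
    obtain ⟨M, hM⟩ := exists_abs_le_and_abs_deriv_le_of_integrable_sq hψ₂ hL0 hL1 hL2
    exact hasDerivAt_Lfun_add_mul_of_ode hψ₂ (hh.1.of_le (by norm_cast)) hode hL0 hL1 hM
      fun x => ⟨by simpa using hC₀ x, by simpa using hC₁ x⟩

/-- differentiability of `t ↦ L(f(·,t))` with
`d/dt L(f(·,t)) = 2∫ f_t(−f_{xx} + f − f²)`; consequently `L` is conserved along KdV flow,
and solutions of `ψ'' − ψ + ψ² = 0` are critical points of `L`. -/
theorem lyapunov_time_derivative (f : ℝ → ℝ → ℝ)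
    (hf : ContDiff ℝ (⊤ : ℕ∞) (fun p : ℝ × ℝ => f p.1 p.2))
    (hS : ∀ t : ℝ, IsSchwartz (fun x => f x t))
    (hB : SchwartzLocUniform f) :
    (∀ t : ℝ, HasDerivAt (fun τ => Lfun (fun x => f x τ))
        (2 * ∫ x : ℝ, deriv (fun τ => f x τ) t *
          (-(iteratedDeriv 2 (fun y => f y t) x) + f x t - (f x t) ^ 2)) t) ∧
    (IsKdVSolution f → ∀ t : ℝ, Lfun (fun x => f x t) = Lfun (fun x => f x 0)) ∧
    (∀ ψ : ℝ → ℝ, ContDiff ℝ (⊤ : ℕ∞) ψ →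
      (∀ x : ℝ, iteratedDeriv 2 ψ x - ψ x + (ψ x) ^ 2 = 0) →
      MeasureTheory.Integrable (fun x : ℝ => (ψ x) ^ 2) →
      MeasureTheory.Integrable (fun x : ℝ => (deriv ψ x) ^ 2) →
      MeasureTheory.Integrable (fun x : ℝ => (iteratedDeriv 2 ψ x) ^ 2) →
      ∀ h : ℝ → ℝ, IsSchwartz h →
        HasDerivAt (fun a : ℝ => Lfun (fun x => ψ x + a * h x)) 0 0) :=
  lyapunov_time_derivative_general f hf hB
end
end

section
/- Let 0 ≤ s < 1 and let m be a symbol as in the definition of I_N. There exists a constant C (depending only on s and the constants in the definition of m) such that for all N ≥ 1 and all ξ₁, ξ₂, ξ₃ ∈ ℝ with ξ₁ + ξ₂ + ξ₃ = 0, |ξ₃| ≤ N < |ξ₂|, and |ξ₂| ≥ 4|ξ₃| (so that |ξ₁| is comparable to |ξ₂|), one has |ξ₁|³ · m(ξ₁) · | m(ξ₂) − m(ξ₂ + ξ₃) | ≤ C · |ξ₁| |ξ₂| |ξ₃| · m(ξ₁) m(ξ₂) m(ξ₃). -/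
open MeasureTheory Real Set

noncomputable section

/-! By the mean value theorem, `|m ξ₂ - m (ξ₂ + ξ₃)|` is at most `|ξ₃|` times the supremum of
`|m'|` over the ball of radius `|ξ₃|` around `ξ₂`, on which `|c| ≥ (3/4) |ξ₂|`. There
`|m' c| ≤ Cm m(c) / |c|`, and `m c ≤ (40/3) m ξ₂` because the symbol changes only by a bounded
factor when its argument shrinks by a bounded factor. Since `|ξ₁| ≤ (5/4) |ξ₂|` and `m ξ₃ = 1`,
this is the claimed bound. -/

namespace IsSymbol

variable {s N Cm : ℝ} {m : ℝ → ℝ}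

theorem deriv_eq_zero_of_abs_lt (hm : IsSymbol s N Cm m) {ξ : ℝ} (hξ : |ξ| < N) :
    deriv m ξ = 0 := by
  obtain ⟨-, -, -, -, hlow, -, -⟩ := hm
  have hconst : m =ᶠ[nhds ξ] fun _ => (1 : ℝ) := by
    filter_upwards [(isOpen_lt continuous_abs continuous_const).mem_nhds hξ] with η hη
    exact hlow η hη.le
  rw [hconst.deriv_eq, deriv_const]

theorem abs_deriv_le (hm : IsSymbol s N Cm m) (hCm : 0 ≤ Cm) (ξ : ℝ) :
    |deriv m ξ| ≤ Cm * m ξ / |ξ| := by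
  have ⟨_, hpos, _, _, _, _, hderiv⟩ := hm
  rcases lt_or_ge |ξ| N with hξ | hξ
  · rw [hm.deriv_eq_zero_of_abs_lt hξ, abs_zero]
    have := (hpos ξ).1
    positivity
  · exact hderiv ξ hξ

theorem div_le_of_abs_le (hm : IsSymbol s N Cm m) (hs0 : 0 ≤ s) (hN : 0 < N) {R ξ : ℝ}
    (hR : 10 * N ≤ R) (hξ : |ξ| ≤ R) : N / R ≤ m ξ := by
  obtain ⟨-, -, -, hmono, -, hhigh, -⟩ := hm
  have hRabs : |R| = R := abs_of_pos (by linarith)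
  have hRN : 1 ≤ R / N := by rw [le_div_iff₀ hN]; linarith
  calc N / R = (R / N) ^ (-1 : ℝ) := by rw [rpow_neg_one, inv_div]
    _ ≤ (R / N) ^ (s - 1) := rpow_le_rpow_of_exponent_le hRN (by linarith)
    _ = m R := by rw [hhigh R (by rwa [hRabs]), hRabs]
    _ ≤ m ξ := hmono ξ R (by rwa [hRabs])

theorem le_mul_of_mul_abs_le (hm : IsSymbol s N Cm m) (hs0 : 0 ≤ s) (hs1 : s < 1) (hN : 0 < N)
    {lam ξ η : ℝ} (hlam0 : 0 < lam) (hlam1 : lam ≤ 1) (hξη : lam * |ξ| ≤ |η|) :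
    m η ≤ 10 / lam * m ξ := by
  have ⟨_, hpos, _, hmono, _, hhigh, _⟩ := hm
  have hmξ := (hpos ξ).1
  have hfactor : 1 ≤ 10 / lam := by rw [le_div_iff₀ hlam0]; linarith
  rcases le_total |ξ| |η| with hle | hlt
  · calc m η ≤ m ξ := hmono ξ η hle
      _ ≤ 10 / lam * m ξ := le_mul_of_one_le_left hmξ.le hfactor
  rcases lt_or_ge |η| (10 * N) with hηN | hηN
  -- below `10 N`, `m η ≤ 1` while `m ξ ≥ lam / 10`
  · have hlower : N / (10 * N / lam) ≤ m ξ :=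
      hm.div_le_of_abs_le hs0 hN (by rw [le_div_iff₀ hlam0]; nlinarith)
        (by rw [le_div_iff₀ hlam0]; nlinarith)
    rw [show N / (10 * N / lam) = lam / 10 by field_simp] at hlower
    calc m η ≤ 1 := (hpos η).2
      _ ≤ 10 / lam * m ξ := by
        rw [div_mul_eq_mul_div, le_div_iff₀ hlam0]; linarith
  -- above `10 N`, both values lie on the power law `(|·| / N) ^ (s - 1)` with `-1 ≤ s - 1 < 0`
  · have hξpos : 0 < |ξ| := by linarith
    calc m η = (|η| / N) ^ (s - 1) := hhigh η hηN
      _ ≤ (lam * (|ξ| / N)) ^ (s - 1) := by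
          apply rpow_le_rpow_of_nonpos (by positivity) _ (by linarith)
          rw [← mul_div_assoc]
          gcongr
      _ = lam ^ (s - 1) * m ξ := by
          rw [mul_rpow hlam0.le (by positivity), hhigh ξ (by linarith)]
      _ ≤ lam ^ (-1 : ℝ) * m ξ :=
          mul_le_mul_of_nonneg_right (rpow_le_rpow_of_exponent_ge hlam0 hlam1 (by linarith)) hmξ.le
      _ ≤ 10 / lam * m ξ := by
          rw [rpow_neg_one, inv_eq_one_div]
          gcongr
          norm_num

theorem abs_sub_le_of_four_mul_abs_le (hm : IsSymbol s N Cm m) (hs0 : 0 ≤ s) (hs1 : s < 1)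
    (hN : 0 < N) (hCm : 0 ≤ Cm) {ξ ζ : ℝ} (hξ : ξ ≠ 0) (hζ : 4 * |ζ| ≤ |ξ|) :
    |m ξ - m (ξ + ζ)| ≤ 160 / 9 * Cm * m ξ / |ξ| * |ζ| := by
  have ⟨hsmooth, hpos, _, _, _, _, _⟩ := hm
  have hξpos : 0 < |ξ| := abs_pos.mpr hξ
  have hbound : ∀ c ∈ Metric.closedBall ξ |ζ|, ‖deriv m c‖ ≤ 160 / 9 * Cm * m ξ / |ξ| := by
    intro c hc
    rw [Metric.mem_closedBall, Real.dist_eq] at hc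
    have hc : 3 / 4 * |ξ| ≤ |c| := by
      linarith [abs_sub_abs_le_abs_sub ξ c, abs_sub_comm ξ c]
    have hcomp : m c ≤ 10 / (3 / 4) * m ξ :=
      hm.le_mul_of_mul_abs_le hs0 hs1 hN (by norm_num) (by norm_num) hc
    calc ‖deriv m c‖ ≤ Cm * m c / |c| := hm.abs_deriv_le hCm c
      _ ≤ Cm * (10 / (3 / 4) * m ξ) / (3 / 4 * |ξ|) := by
          gcongr
          exact mul_nonneg hCm (mul_nonneg (by norm_num) (hpos ξ).1.le)
      _ = 160 / 9 * Cm * m ξ / |ξ| := by field_simp; ring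
  have hmvt := (convex_closedBall ξ |ζ|).norm_image_sub_le_of_norm_deriv_le
    (fun c _ => hsmooth.differentiable (by simp) c) hbound (y := ξ) (x := ξ + ζ)
    (by simp [Metric.mem_closedBall]) (Metric.mem_closedBall_self (abs_nonneg ζ))
  simpa using hmvt

end IsSymbol

/-- mean value estimate (3.8): pointwise symbol bound in the regime
`|ξ₃| ≤ N < |ξ₂|`, `|ξ₂| ≥ 4|ξ₃|`. -/
theorem symbol_mean_value_bound (s : ℝ) (hs0 : 0 ≤ s) (hs1 : s < 1)
    (Cm : ℝ) (hCm : 0 < Cm) :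
    ∃ C : ℝ, 0 < C ∧
      ∀ N : ℝ, 1 ≤ N → ∀ m : ℝ → ℝ, IsSymbol s N Cm m →
        ∀ ξ₁ ξ₂ ξ₃ : ℝ, ξ₁ + ξ₂ + ξ₃ = 0 → |ξ₃| ≤ N → N < |ξ₂| → 4 * |ξ₃| ≤ |ξ₂| →
          |ξ₁| ^ 3 * m ξ₁ * |m ξ₂ - m (ξ₂ + ξ₃)| ≤
            C * (|ξ₁| * |ξ₂| * |ξ₃|) * (m ξ₁ * m ξ₂ * m ξ₃) := by
  refine ⟨250 / 9 * Cm, by positivity, ?_⟩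
  intro N hN m hm ξ₁ ξ₂ ξ₃ hsum h3N hN2 h43
  have hξ₂ : 0 < |ξ₂| := by linarith
  have ⟨_, hpos, _, _, hlow, _, _⟩ := hm
  have hm₁ := (hpos ξ₁).1
  have hm₂ := (hpos ξ₂).1
  have hm₃ : m ξ₃ = 1 := hlow ξ₃ h3N
  have hdiff := hm.abs_sub_le_of_four_mul_abs_le hs0 hs1 (by linarith) hCm.le
    (abs_pos.mp hξ₂) h43
  have hξ₁ : |ξ₁| ≤ 5 / 4 * |ξ₂| := by
    rw [show ξ₁ = -(ξ₂ + ξ₃) by linarith, abs_neg]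
    linarith [abs_add_le ξ₂ ξ₃]
  have hcube : |ξ₁| ^ 3 ≤ 25 / 16 * |ξ₁| * |ξ₂| ^ 2 := by
    have := abs_nonneg ξ₁
    nlinarith [mul_le_mul hξ₁ hξ₁ this (by positivity)]
  calc |ξ₁| ^ 3 * m ξ₁ * |m ξ₂ - m (ξ₂ + ξ₃)|
      ≤ |ξ₁| ^ 3 * m ξ₁ * (160 / 9 * Cm * m ξ₂ / |ξ₂| * |ξ₃|) := by gcongr
    _ ≤ 25 / 16 * |ξ₁| * |ξ₂| ^ 2 * m ξ₁ * (160 / 9 * Cm * m ξ₂ / |ξ₂| * |ξ₃|) := by gcongr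
    _ = 250 / 9 * Cm * (|ξ₁| * |ξ₂| * |ξ₃|) * (m ξ₁ * m ξ₂ * m ξ₃) := by
        rw [hm₃]; field_simp; ring
end
end

section
/- Let u be a classical solution of the KdV equation. Then the three functionals G(u(·,t)) = ∫_ℝ u(x,t) dx, ∫_ℝ u(x,t)² dx, and H(u(·,t)) = ∫_ℝ ( u_x(x,t)² − (2/3) u(x,t)³ ) dx are each independent of t: for all t ∈ ℝ they equal their values at t = 0. -/
open MeasureTheory Real Set

noncomputable section

/-!
Each of the three functionals has a density `ρ` obeying, along a KdV solution, a local
conservation law `∂ₜρ + ∂ₓj = 0` whose flux `j` is a polynomial in `u` and its spatial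
derivatives: `j = u_xx + u²` for `∫ u`, `j = 2 u u_xx - u_x² + (4/3) u³` for `∫ u²`, and
`j = 2 u_x u_xxx + 4 u u_x² - (u_xx + u²)²` for the Hamiltonian, where `∂ₜ u_x` is obtained
by exchanging the mixed partials and differentiating the equation in `x`. The locally uniform
Schwartz bounds justify differentiating under the integral sign, so
`d/dt ∫ ρ = -∫ ∂ₓj = 0` because `j` vanishes at spatial infinity.
-/

open Filter Topology

def DecaysLocUniformly (F : ℝ → ℝ → ℝ) : Prop :=
  ∀ T : ℝ, ∃ C : ℝ, ∀ x t : ℝ, |t| ≤ T → (1 + x ^ 2) * |F x t| ≤ C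

namespace DecaysLocUniformly

variable {F G : ℝ → ℝ → ℝ}

theorem abs_le (hF : DecaysLocUniformly F) (T : ℝ) :
    ∃ C : ℝ, ∀ x t : ℝ, |t| ≤ T → |F x t| ≤ C * (1 + x ^ 2)⁻¹ := by
  obtain ⟨C, hC⟩ := hF T
  exact ⟨C, fun x t ht => by rw [← div_eq_mul_inv, le_div_iff₀' (by positivity)]; exact hC x t ht⟩

theorem add (hF : DecaysLocUniformly F) (hG : DecaysLocUniformly G) :
    DecaysLocUniformly (fun x t => F x t + G x t) := by
  intro T
  obtain ⟨C, hC⟩ := hF T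
  obtain ⟨D, hD⟩ := hG T
  refine ⟨C + D, fun x t ht => ?_⟩
  calc (1 + x ^ 2) * |F x t + G x t| ≤ (1 + x ^ 2) * (|F x t| + |G x t|) := by
        gcongr; exact abs_add_le _ _
    _ ≤ C + D := by linarith [hC x t ht, hD x t ht]

theorem const_mul (hF : DecaysLocUniformly F) (c : ℝ) :
    DecaysLocUniformly (fun x t => c * F x t) := by
  intro T
  obtain ⟨C, hC⟩ := hF T
  refine ⟨|c| * C, fun x t ht => ?_⟩
  rw [abs_mul, mul_left_comm]
  exact mul_le_mul_of_nonneg_left (hC x t ht) (abs_nonneg c)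

theorem neg (hF : DecaysLocUniformly F) : DecaysLocUniformly (fun x t => -F x t) := by
  simpa using hF.const_mul (-1)

theorem sub (hF : DecaysLocUniformly F) (hG : DecaysLocUniformly G) :
    DecaysLocUniformly (fun x t => F x t - G x t) := by
  simpa [sub_eq_add_neg] using hF.add hG.neg

theorem mul (hF : DecaysLocUniformly F) (hG : DecaysLocUniformly G) :
    DecaysLocUniformly (fun x t => F x t * G x t) := by
  intro T
  obtain ⟨C, hC⟩ := hF T
  obtain ⟨D, hD⟩ := hG T
  refine ⟨C * D, fun x t ht => ?_⟩
  have hF_le : |F x t| ≤ C :=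
    le_trans (le_mul_of_one_le_left (abs_nonneg _) (by nlinarith [sq_nonneg x])) (hC x t ht)
  rw [abs_mul, mul_left_comm]
  exact mul_le_mul hF_le (hD x t ht) (by positivity) ((abs_nonneg _).trans hF_le)

theorem pow (hF : DecaysLocUniformly F) {n : ℕ} (hn : n ≠ 0) :
    DecaysLocUniformly (fun x t => F x t ^ n) := by
  induction n with
  | zero => exact absurd rfl hn
  | succ n ih =>
    rcases eq_or_ne n 0 with rfl | hn'
    · simpa using hF
    · simpa only [pow_succ] using (ih hn').mul hF

theorem integrable (hF : DecaysLocUniformly F) {t : ℝ}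
    (hm : AEStronglyMeasurable (fun x => F x t)) : Integrable (fun x => F x t) := by
  obtain ⟨C, hC⟩ := hF.abs_le |t|
  exact (integrable_inv_one_add_sq.const_mul C).mono' hm
    (Eventually.of_forall fun x => hC x t le_rfl)

theorem tendsto_cocompact (hF : DecaysLocUniformly F) (t : ℝ) :
    Tendsto (fun x => F x t) (cocompact ℝ) (𝓝 0) := by
  obtain ⟨C, hC⟩ := hF.abs_le |t|
  have h_sq : Tendsto (fun x : ℝ => 1 + x ^ 2) (cocompact ℝ) atTop := by
    refine tendsto_atTop_add_const_left _ _ ?_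
    refine ((tendsto_pow_atTop two_ne_zero).comp tendsto_norm_cocompact_atTop).congr fun x => ?_
    simp [Real.norm_eq_abs, sq_abs]
  refine squeeze_zero_norm (fun x => hC x t le_rfl) ?_
  simpa using h_sq.inv_tendsto_atTop.const_mul C

theorem exists_integrable_bound (hF : DecaysLocUniformly F) (t₀ : ℝ) :
    ∃ b : ℝ → ℝ, Integrable b ∧ ∀ᶠ t in 𝓝 t₀, ∀ x, |F x t| ≤ b x := by
  obtain ⟨C, hC⟩ := hF.abs_le (|t₀| + 1)
  refine ⟨fun x => C * (1 + x ^ 2)⁻¹, integrable_inv_one_add_sq.const_mul C, ?_⟩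
  filter_upwards [(continuous_abs.tendsto t₀).eventually (gt_mem_nhds (lt_add_one |t₀|))]
    with t ht x using hC x t ht.le

end DecaysLocUniformly

theorem integral_eq_integral_zero_of_conservation_law {ρ ρ' j : ℝ → ℝ → ℝ}
    (hρ : ∀ x t, HasDerivAt (fun τ => ρ x τ) (ρ' x t) t)
    (hj : ∀ x t, HasDerivAt (fun y => j y t) (-ρ' x t) x)
    (hρ_int : ∀ t, Integrable fun x => ρ x t)
    (hj_lim : ∀ t, Tendsto (fun x => j x t) (cocompact ℝ) (𝓝 0))
    (hρ'_le : ∀ t₀, ∃ b : ℝ → ℝ, Integrable b ∧ ∀ᶠ t in 𝓝 t₀, ∀ x, |ρ' x t| ≤ b x)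
    (t : ℝ) : ∫ x, ρ x t = ∫ x, ρ x 0 := by
  have h_deriv : ∀ t₀, HasDerivAt (fun t => ∫ x, ρ x t) 0 t₀ := by
    intro t₀
    obtain ⟨b, hb_int, hb_le⟩ := hρ'_le t₀
    obtain ⟨s, hs, hs_le⟩ := hb_le.exists_mem
    have hρ'_meas : AEStronglyMeasurable (fun x => ρ' x t₀) := by
      refine (aestronglyMeasurable_deriv (fun y => j y t₀) volume).neg.congr
        (Eventually.of_forall fun x => ?_)
      simp [(hj x t₀).deriv]
    obtain ⟨hρ'_int, h⟩ := hasDerivAt_integral_of_dominated_loc_of_deriv_le hs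
      (Eventually.of_forall fun t => (hρ_int t).aestronglyMeasurable) (hρ_int t₀) hρ'_meas
      (Eventually.of_forall fun x t ht => hs_le t ht x) hb_int
      (Eventually.of_forall fun x t _ => hρ x t)
    have h_flux : ∫ x, -ρ' x t₀ = 0 := by
      simpa using integral_of_hasDerivAt_of_tendsto (fun x => hj x t₀) hρ'_int.neg
        ((hj_lim t₀).mono_left atBot_le_cocompact) ((hj_lim t₀).mono_left atTop_le_cocompact)
    rw [integral_neg, neg_eq_zero] at h_flux
    rwa [h_flux] at h
  exact is_const_of_deriv_eq_zero (fun s => (h_deriv s).differentiableAt)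
    (fun s => (h_deriv s).deriv) t 0

section PartialDerivatives

variable {E : Type*} [NormedAddCommGroup E] [NormedSpace ℝ E] {G : ℝ × ℝ → E} {x t : ℝ}

theorem DifferentiableAt.hasDerivAt_fst_slice (hG : DifferentiableAt ℝ G (x, t)) :
    HasDerivAt (fun y => G (y, t)) (fderiv ℝ G (x, t) (1, 0)) x :=
  hG.hasFDerivAt.comp_hasDerivAt x ((hasDerivAt_id x).prodMk (hasDerivAt_const x t))

theorem DifferentiableAt.hasDerivAt_snd_slice (hG : DifferentiableAt ℝ G (x, t)) :
    HasDerivAt (fun τ => G (x, τ)) (fderiv ℝ G (x, t) (0, 1)) t :=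
  hG.hasFDerivAt.comp_hasDerivAt t ((hasDerivAt_const t x).prodMk (hasDerivAt_id t))

end PartialDerivatives

section MixedPartials

variable {u : ℝ → ℝ → ℝ}

theorem hasDerivAt_time_of_contDiff (hu : ContDiff ℝ 1 (fun p : ℝ × ℝ => u p.1 p.2)) (x t : ℝ) :
    HasDerivAt (fun τ => u x τ) (deriv (fun τ => u x τ) t) t :=
  (hu.differentiable one_ne_zero (x, t)).hasDerivAt_snd_slice.differentiableAt.hasDerivAt

/-- Schwarz's theorem `∂ₜ∂ₓu = ∂ₓ∂ₜu` for a `C²` function of two variables. -/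
theorem hasDerivAt_time_deriv_space_of_contDiff (hu : ContDiff ℝ 2 (fun p : ℝ × ℝ => u p.1 p.2))
    (x t : ℝ) :
    HasDerivAt (fun τ => deriv (fun y => u y τ) x)
      (deriv (fun y => deriv (fun τ => u y τ) t) x) t := by
  set U : ℝ × ℝ → ℝ := fun p => u p.1 p.2
  have hU : Differentiable ℝ U := hu.differentiable (by norm_num)
  have hDU : Differentiable ℝ (fderiv ℝ U) :=
    (hu.fderiv_right (m := 1) (by norm_num)).differentiable one_ne_zero
  have h_space : (fun τ => deriv (fun y => u y τ) x) = fun τ => fderiv ℝ U (x, τ) (1, 0) :=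
    funext fun τ => (hU (x, τ)).hasDerivAt_fst_slice.deriv
  have h_time : (fun y => deriv (fun τ => u y τ) t) = fun y => fderiv ℝ U (y, t) (0, 1) :=
    funext fun y => (hU (y, t)).hasDerivAt_snd_slice.deriv
  rw [h_space, h_time, ((hDU (x, t)).hasDerivAt_fst_slice.clm_apply (hasDerivAt_const x _)).deriv]
  simpa [(hu.contDiffAt.isSymmSndFDerivAt (by simp)) (1, 0) (0, 1)] using
    (hDU (x, t)).hasDerivAt_snd_slice.clm_apply (hasDerivAt_const t ((1 : ℝ), (0 : ℝ)))

end MixedPartials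

def spatialDeriv (n : ℕ) (u : ℝ → ℝ → ℝ) (x t : ℝ) : ℝ :=
  iteratedDeriv n (fun y => u y t) x

section SpatialDeriv

variable {u : ℝ → ℝ → ℝ}

@[simp]
theorem spatialDeriv_zero : spatialDeriv 0 u = u := by
  ext x t
  simp [spatialDeriv]

@[simp]
theorem spatialDeriv_one (x t : ℝ) : spatialDeriv 1 u x t = deriv (fun y => u y t) x := by
  simp [spatialDeriv]

theorem hasDerivAt_spatialDeriv (hu : ∀ t, ContDiff ℝ (⊤ : ℕ∞) fun y => u y t) (n : ℕ)
    (x t : ℝ) : HasDerivAt (fun y => spatialDeriv n u y t) (spatialDeriv (n + 1) u x t) x := by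
  unfold spatialDeriv
  rw [iteratedDeriv_succ]
  exact ((hu t).differentiable_iteratedDeriv n (mod_cast WithTop.coe_lt_top n) x).hasDerivAt

theorem continuous_spatialDeriv (hu : ∀ t, ContDiff ℝ (⊤ : ℕ∞) fun y => u y t) (n : ℕ) (t : ℝ) :
    Continuous fun x => spatialDeriv n u x t :=
  continuous_iff_continuousAt.2 fun x => (hasDerivAt_spatialDeriv hu n x t).continuousAt

theorem SchwartzLocUniform.decaysLocUniformly_spatialDeriv (hb : SchwartzLocUniform u) (n : ℕ) :
    DecaysLocUniformly (spatialDeriv n u) := by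
  intro T
  obtain ⟨C₀, h₀⟩ := hb 0 n 0 T
  obtain ⟨C₂, h₂⟩ := hb 2 n 0 T
  refine ⟨C₀ + C₂, fun x t ht => ?_⟩
  have h₀' := h₀ x t ht
  have h₂' := h₂ x t ht
  simp only [iteratedDeriv_zero, pow_zero, one_mul, sq_abs] at h₀' h₂'
  rw [add_mul, one_mul]
  exact add_le_add h₀' h₂'

theorem SchwartzLocUniform.decaysLocUniformly (hb : SchwartzLocUniform u) :
    DecaysLocUniformly u := by
  simpa using hb.decaysLocUniformly_spatialDeriv 0

theorem SchwartzLocUniform.decaysLocUniformly_kdv_rhs (hb : SchwartzLocUniform u) :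
    DecaysLocUniformly fun x t => -(spatialDeriv 3 u x t + 2 * u x t * spatialDeriv 1 u x t) :=
  have hD := hb.decaysLocUniformly_spatialDeriv
  ((hD 3).add ((hb.decaysLocUniformly.const_mul 2).mul (hD 1))).neg

end SpatialDeriv

namespace IsKdVSolution

variable {u : ℝ → ℝ → ℝ}

theorem contDiff_space (hu : IsKdVSolution u) (t : ℝ) : ContDiff ℝ (⊤ : ℕ∞) fun y => u y t :=
  (hu.2.1 t).1

theorem hasDerivAt_space (hu : IsKdVSolution u) (x t : ℝ) :
    HasDerivAt (fun y => u y t) (spatialDeriv 1 u x t) x := by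
  simpa only [spatialDeriv_zero] using hasDerivAt_spatialDeriv hu.contDiff_space 0 x t

theorem deriv_time (hu : IsKdVSolution u) (x t : ℝ) :
    deriv (fun τ => u x τ) t = -(spatialDeriv 3 u x t + 2 * u x t * spatialDeriv 1 u x t) := by
  have h_sq : deriv (fun y => u y t ^ 2) x = 2 * u x t * spatialDeriv 1 u x t := by
    simpa using ((hu.hasDerivAt_space x t).fun_pow 2).deriv
  have h_eq : deriv (fun τ => u x τ) t + spatialDeriv 3 u x t + deriv (fun y => u y t ^ 2) x = 0 :=
    hu.2.2 x t
  linarith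

theorem hasDerivAt_time (hu : IsKdVSolution u) (x t : ℝ) :
    HasDerivAt (fun τ => u x τ)
      (-(spatialDeriv 3 u x t + 2 * u x t * spatialDeriv 1 u x t)) t :=
  hu.deriv_time x t ▸ hasDerivAt_time_of_contDiff (hu.1.of_le (by norm_cast)) x t

theorem hasDerivAt_time_spatialDeriv_one (hu : IsKdVSolution u) (x t : ℝ) :
    HasDerivAt (fun τ => spatialDeriv 1 u x τ)
      (-(spatialDeriv 4 u x t + 2 * spatialDeriv 1 u x t ^ 2
        + 2 * u x t * spatialDeriv 2 u x t)) t := by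
  have hD := hasDerivAt_spatialDeriv hu.contDiff_space
  have h_ut : (fun y => deriv (fun τ => u y τ) t)
      = fun y => -(spatialDeriv 3 u y t + 2 * u y t * spatialDeriv 1 u y t) :=
    funext fun y => hu.deriv_time y t
  have h := hasDerivAt_time_deriv_space_of_contDiff (hu.1.of_le (by norm_cast)) x t
  rw [h_ut, (((hD 3 x t).fun_add (((hu.hasDerivAt_space x t).const_mul 2).fun_mul
    (hD 1 x t))).fun_neg).deriv] at h
  simp only [spatialDeriv_one] at h ⊢
  convert h using 1
  ring

theorem integral_eq (hu : IsKdVSolution u) (hb : SchwartzLocUniform u) (t : ℝ) :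
    ∫ x, u x t = ∫ x, u x 0 := by
  have hD := hb.decaysLocUniformly_spatialDeriv
  have hu_dec := hb.decaysLocUniformly
  refine integral_eq_integral_zero_of_conservation_law hu.hasDerivAt_time
    (j := fun x t => spatialDeriv 2 u x t + u x t ^ 2) (fun x t => ?_)
    (fun t => hu_dec.integrable (hu.contDiff_space t).continuous.aestronglyMeasurable)
    ((hD 2).add (hu_dec.pow two_ne_zero)).tendsto_cocompact
    hb.decaysLocUniformly_kdv_rhs.exists_integrable_bound t
  refine ((hasDerivAt_spatialDeriv hu.contDiff_space 2 x t).fun_add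
    ((hu.hasDerivAt_space x t).fun_pow 2)).congr_deriv ?_
  ring

theorem integral_sq_eq (hu : IsKdVSolution u) (hb : SchwartzLocUniform u) (t : ℝ) :
    ∫ x, u x t ^ 2 = ∫ x, u x 0 ^ 2 := by
  have hD := hb.decaysLocUniformly_spatialDeriv
  have hDx := hasDerivAt_spatialDeriv hu.contDiff_space
  have hu_dec := hb.decaysLocUniformly
  refine integral_eq_integral_zero_of_conservation_law
    (ρ' := fun x t => 2 * u x t * -(spatialDeriv 3 u x t + 2 * u x t * spatialDeriv 1 u x t))
    (j := fun x t => 2 * u x t * spatialDeriv 2 u x t - spatialDeriv 1 u x t ^ 2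
      + 4 / 3 * u x t ^ 3)
    (fun x t => ?_) (fun x t => ?_)
    (fun t => (hu_dec.pow two_ne_zero).integrable
      ((hu.contDiff_space t).continuous.pow 2).aestronglyMeasurable)
    ((((hu_dec.const_mul 2).mul (hD 2)).sub ((hD 1).pow two_ne_zero)).add
      ((hu_dec.pow three_ne_zero).const_mul (4 / 3))).tendsto_cocompact
    ((hu_dec.const_mul 2).mul hb.decaysLocUniformly_kdv_rhs).exists_integrable_bound t
  · refine ((hu.hasDerivAt_time x t).fun_pow 2).congr_deriv ?_
    ring
  · refine (((((hu.hasDerivAt_space x t).const_mul 2).fun_mul (hDx 2 x t)).fun_sub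
      ((hDx 1 x t).fun_pow 2)).fun_add
      (((hu.hasDerivAt_space x t).fun_pow 3).const_mul (4 / 3))).congr_deriv ?_
    ring

theorem integral_hamiltonian_eq (hu : IsKdVSolution u) (hb : SchwartzLocUniform u) (t : ℝ) :
    ∫ x, deriv (fun y => u y t) x ^ 2 - 2 / 3 * u x t ^ 3 =
      ∫ x, deriv (fun y => u y 0) x ^ 2 - 2 / 3 * u x 0 ^ 3 := by
  have hD := hb.decaysLocUniformly_spatialDeriv
  have hDx := hasDerivAt_spatialDeriv hu.contDiff_space
  have hu_dec := hb.decaysLocUniformly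
  have h_cons := integral_eq_integral_zero_of_conservation_law
    (ρ := fun x t => spatialDeriv 1 u x t ^ 2 - 2 / 3 * u x t ^ 3)
    (ρ' := fun x t => 2 * spatialDeriv 1 u x t * -(spatialDeriv 4 u x t
        + 2 * spatialDeriv 1 u x t ^ 2 + 2 * u x t * spatialDeriv 2 u x t)
      - 2 / 3 * (3 * u x t ^ 2 * -(spatialDeriv 3 u x t + 2 * u x t * spatialDeriv 1 u x t)))
    (j := fun x t => 2 * spatialDeriv 1 u x t * spatialDeriv 3 u x t
      + 4 * u x t * spatialDeriv 1 u x t ^ 2 - (spatialDeriv 2 u x t + u x t ^ 2) ^ 2)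
    (fun x t => ?_) (fun x t => ?_)
    (fun t => ?_)
    (((((hD 1).const_mul 2).mul (hD 3)).add ((hu_dec.const_mul 4).mul ((hD 1).pow two_ne_zero))).sub
      (((hD 2).add (hu_dec.pow two_ne_zero)).pow two_ne_zero)).tendsto_cocompact
    ?_ t
  · simpa only [spatialDeriv_one] using h_cons
  · refine (((hu.hasDerivAt_time_spatialDeriv_one x t).fun_pow 2).fun_sub
      (((hu.hasDerivAt_time x t).fun_pow 3).const_mul (2 / 3))).congr_deriv ?_
    ring
  · refine (((((hDx 1 x t).const_mul 2).fun_mul (hDx 3 x t)).fun_add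
      (((hu.hasDerivAt_space x t).const_mul 4).fun_mul ((hDx 1 x t).fun_pow 2))).fun_sub
      (((hDx 2 x t).fun_add ((hu.hasDerivAt_space x t).fun_pow 2)).fun_pow 2)).congr_deriv ?_
    ring
  · refine (((hD 1).pow two_ne_zero).sub
      ((hu_dec.pow three_ne_zero).const_mul (2 / 3))).integrable ?_
    exact (((continuous_spatialDeriv hu.contDiff_space 1 t).pow 2).sub
      (continuous_const.mul ((hu.contDiff_space t).continuous.pow 3))).aestronglyMeasurable
  · have h_uxt := (((hD 4).add (((hD 1).pow two_ne_zero).const_mul 2)).add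
      ((hu_dec.const_mul 2).mul (hD 2))).neg
    exact ((((hD 1).const_mul 2).mul h_uxt).sub ((((hu_dec.pow two_ne_zero).const_mul 3).mul
      hb.decaysLocUniformly_kdv_rhs).const_mul (2 / 3))).exists_integrable_bound

end IsKdVSolution

/-- the three conserved quantities of KdV: the mean `∫u`, the `L²` mass
`∫u²`, and the Hamiltonian `H(u) = ∫ u_x² − (2/3)u³` are constant in time. -/
theorem kdv_conservation_laws (u : ℝ → ℝ → ℝ)
    (hu : IsKdVSolution u) (hb : SchwartzLocUniform u) :
    (∀ t : ℝ, (∫ x : ℝ, u x t) = ∫ x : ℝ, u x 0) ∧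
    (∀ t : ℝ, (∫ x : ℝ, (u x t) ^ 2) = ∫ x : ℝ, (u x 0) ^ 2) ∧
    (∀ t : ℝ, (∫ x : ℝ, (deriv (fun y => u y t) x) ^ 2 - (2 / 3) * (u x t) ^ 3) =
        ∫ x : ℝ, (deriv (fun y => u y 0) x) ^ 2 - (2 / 3) * (u x 0) ^ 3) :=
  ⟨hu.integral_eq hb, hu.integral_sq_eq hb, hu.integral_hamiltonian_eq hb⟩
end
end
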